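/- Let τ > 0, let w ∈ ℝ^p with w_k ≥ 0 for all k, and let s ∈ ℝ^p satisfy s_k ≤ z_k(x) for all x ∈ X and all k. If x̄ ∈ X minimizes the augmented weighted Tchebycheff scalarization x ↦ max_{k=1,…,p} w_k (z_k(x) − s_k) + τ Σ_{k=1}^p (z_k(x) − s_k) over X, then x̄ is efficient. -/

import Mathlib

/-! If `x̂` dominated `x̄`, the max-term would not increase while the strictly positive
`τ`-weighted sum term would strictly decrease, so `x̂` would score strictly better than `x̄`. -/

open Finset

section AugmentedTchebycheff

variable {ι : Type*} [Fintype ι] [Nonempty ι]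

noncomputable def augWeightedTchebycheff (w s : ι → ℝ) (τ : ℝ) (y : ι → ℝ) : ℝ :=
  univ.sup' univ_nonempty (fun k => w k * (y k - s k)) + τ * ∑ k, (y k - s k)

theorem augWeightedTchebycheff_strictMono {w : ι → ℝ} (hw : 0 ≤ w) (s : ι → ℝ) {τ : ℝ}
    (hτ : 0 < τ) : StrictMono (augWeightedTchebycheff w s τ) := by
  intro y y' hyy'
  have hmax : univ.sup' univ_nonempty (fun k => w k * (y k - s k)) ≤
      univ.sup' univ_nonempty (fun k => w k * (y' k - s k)) :=
    sup'_mono_fun fun k _ => mul_le_mul_of_nonneg_left (sub_le_sub_right (hyy'.le k) _) (hw k)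
  have hsum : ∑ k, (y k - s k) < ∑ k, (y' k - s k) :=
    Fintype.sum_strictMono (sub_lt_sub_right hyy' s)
  exact add_lt_add_of_le_of_lt hmax (mul_lt_mul_of_pos_left hsum hτ)

end AugmentedTchebycheff

/-- Let `τ > 0`, `w_k ≥ 0` for all `k`, and `s_k ≤ z_k(x)` for all `x ∈ X`
and all `k`.  If `x̄ ∈ X` minimizes the augmented weighted Tchebycheff scalarization
`x ↦ max_k w_k (z_k(x) - s_k) + τ Σ_k (z_k(x) - s_k)` over `X`, then `x̄` is efficient. -/
theorem augmented_weighted_tchebycheff_optimal_is_efficient {α : Type*}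
    (X : Finset α) (p : ℕ) (hp : 2 ≤ p)
    (z : α → Fin p → ℝ) (τ : ℝ) (hτ : 0 < τ)
    (w : Fin p → ℝ) (hw : ∀ k, 0 ≤ w k)
    (s : Fin p → ℝ)
    (xbar : α)
    (hopt : ∀ x ∈ X,
      (Finset.univ.sup' (Finset.univ_nonempty_iff.mpr ⟨⟨0, by omega⟩⟩)
        fun k => w k * (z xbar k - s k)) + τ * ∑ k, (z xbar k - s k) ≤
      (Finset.univ.sup' (Finset.univ_nonempty_iff.mpr ⟨⟨0, by omega⟩⟩)
        fun k => w k * (z x k - s k)) + τ * ∑ k, (z x k - s k)) :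
    ¬ ∃ xhat ∈ X, (∀ k, z xhat k ≤ z xbar k) ∧ z xhat ≠ z xbar := by
  rintro ⟨xhat, hxhat, hle, hne⟩
  have : Nonempty (Fin p) := ⟨⟨0, by omega⟩⟩
  have hdom : z xhat < z xbar := lt_of_le_of_ne hle hne
  exact (hopt xhat hxhat).not_gt (augWeightedTchebycheff_strictMono hw s hτ hdom)
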